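/- arXiv:1411.8002 — 3 statements merged into one kernel-verified Lean document; each statement's English description precedes it below -/
import Mathlib

section
/- Define f(t) = P(ξ₀ ≤ t and there is an odd descent at 0), where (ξ_i)_{i∈ℤ} are i.i.d. with continuous distribution function F; an odd descent at 0 of length 2k+1 means ξ₀ > ξ₁ > ⋯ > ξ_{2k} < ξ_{2k+1}. Then f(t) = 1 − e^{−F(t)}. -/
/-!
Let `D n` be the event `t ≥ ξ₀ > ξ₁ > ⋯ > ξₙ`. The law of `(ξ₀, …, ξₙ)` is the product measure,
which is invariant under permuting coordinates and gives no mass to ties, so the `(n+1)!` strict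
orderings of a point of `(-∞, t]ⁿ⁺¹` are equally likely and `P(D n) = F(t)ⁿ⁺¹ / (n+1)!`.
Up to a tie, the odd descent of length `2k+1` is `D (2k) \ D (2k+1)`, hence the probability is
`∑ₖ (F^(2k+1)/(2k+1)! - F^(2k+2)/(2k+2)!) = sinh F - (cosh F - 1) = 1 - e^(-F)`.
-/

open MeasureTheory ProbabilityTheory Function

namespace MeasureTheory.Measure

theorem prod_diagonal_eq_zero {α : Type*} [MeasurableSpace α] [MeasurableEq α]
    (μ ν : Measure α) [SFinite ν] [NullSingletonClass ν] :
    μ.prod ν (Set.diagonal α) = 0 := by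
  have hslice : ∀ x, Prod.mk x ⁻¹' Set.diagonal α = {x} := fun x => by
    ext y; simp [eq_comm]
  simp [Measure.prod_apply measurableSet_diagonal, hslice]

end MeasureTheory.Measure

namespace ProbabilityTheory

theorem IndepFun.measure_eq_eq_zero {Ω α : Type*} [MeasurableSpace Ω] [MeasurableSpace α]
    [MeasurableEq α] {P : Measure Ω} [IsFiniteMeasure P] {X Y : Ω → α}
    (hX : Measurable X) (hY : Measurable Y) (hXY : IndepFun X Y P)
    [NullSingletonClass (P.map Y)] :
    P {ω | X ω = Y ω} = 0 := by
  have hmap := (indepFun_iff_map_prod_eq_prod_map_map hX.aemeasurable hY.aemeasurable).mp hXY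
  change P ((fun ω => (X ω, Y ω)) ⁻¹' Set.diagonal α) = 0
  rw [← Measure.map_apply (hX.prodMk hY) measurableSet_diagonal, hmap]
  exact Measure.prod_diagonal_eq_zero _ _

end ProbabilityTheory

section Sorting

variable {α : Type*} [LinearOrder α] {m : ℕ}

theorem Function.Injective.exists_perm_strictMono {x : Fin m → α} (hx : Injective x) :
    ∃ σ : Equiv.Perm (Fin m), StrictMono (x ∘ σ) :=
  ⟨Tuple.sort x, (Tuple.monotone_sort x).strictMono_of_injective (hx.comp (Tuple.sort x).injective)⟩

theorem pairwise_disjoint_setOf_strictMono_comp_perm :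
    Pairwise (Disjoint on fun σ : Equiv.Perm (Fin m) => {x : Fin m → α | StrictMono (x ∘ σ)}) := by
  intro σ τ hστ
  refine Set.disjoint_left.mpr fun x (hσ : StrictMono (x ∘ σ)) (hτ : StrictMono (x ∘ τ)) => hστ ?_
  have hrange : Set.range (x ∘ σ) = Set.range (x ∘ τ) := by
    rw [Set.range_comp, Set.range_comp, σ.range_eq_univ, τ.range_eq_univ]
  have hx : Injective x := by
    simpa using hσ.injective.comp σ.symm.injective
  exact Equiv.ext fun i => hx (congrFun ((hσ.range_inj hτ).mp hrange) i)

theorem Fin.strictMono_comp_revPerm_iff {x : Fin m → α} :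
    StrictMono (x ∘ Fin.revPerm) ↔ StrictAnti x :=
  ⟨fun h => by simpa [comp_def] using StrictMono.comp_strictAnti h Fin.rev_strictAnti,
    fun h => h.comp Fin.rev_strictAnti⟩

end Sorting

theorem measurableSet_setOf_forall_mem_strictMono_comp {m : ℕ} {s : Set ℝ} (hs : MeasurableSet s)
    (σ : Equiv.Perm (Fin m)) :
    MeasurableSet {x : Fin m → ℝ | (∀ i, x i ∈ s) ∧ StrictMono (x ∘ σ)} := by
  have : {x : Fin m → ℝ | (∀ i, x i ∈ s) ∧ StrictMono (x ∘ σ)} =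
      (⋂ i, (fun x => x i) ⁻¹' s) ∩ ⋂ i, ⋂ j, ⋂ (_ : i < j), {x | x (σ i) < x (σ j)} := by
    ext x; simp [StrictMono]
  rw [this]
  exact (MeasurableSet.iInter fun i => measurable_pi_apply i hs).inter
    (.iInter fun i => .iInter fun j => .iInter fun _ =>
      measurableSet_lt (measurable_pi_apply _) (measurable_pi_apply _))

namespace MeasureTheory.Measure

theorem pi_setOf_comp_perm_mem {α : Type*} [MeasurableSpace α] {m : ℕ} (μ : Measure α)
    [SigmaFinite μ] (σ : Equiv.Perm (Fin m)) {A : Set (Fin m → α)} (hA : MeasurableSet A) :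
    Measure.pi (fun _ : Fin m => μ) {x | x ∘ σ ∈ A} = Measure.pi (fun _ : Fin m => μ) A := by
  have happ : ∀ x : Fin m → α, MeasurableEquiv.piCongrLeft (fun _ => α) σ.symm x = x ∘ σ := by
    intro x; ext j
    simpa using
      MeasurableEquiv.piCongrLeft_apply_apply (σ.symm : Fin m ≃ Fin m) (β := fun _ => α) x (σ j)
  simpa [Set.preimage, happ] using
    (measurePreserving_piCongrLeft (fun _ : Fin m => μ) σ.symm).measure_preimage
      hA.nullMeasurableSet

variable {m : ℕ} {μ : Measure ℝ} [IsProbabilityMeasure μ] [NullSingletonClass μ]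

theorem pi_setOf_apply_eq_apply {i j : Fin m} (hij : i ≠ j) :
    Measure.pi (fun _ : Fin m => μ) {x | x i = x j} = 0 := by
  have hindep : iIndepFun (fun i (x : Fin m → ℝ) => x i) (Measure.pi fun _ => μ) :=
    iIndepFun_pi (X := fun _ => id) fun _ => aemeasurable_id
  have : NullSingletonClass ((Measure.pi fun _ : Fin m => μ).map fun x => x j) := by
    rw [(measurePreserving_eval _ j).map_eq]; infer_instance
  exact (hindep.indepFun hij).measure_eq_eq_zero (measurable_pi_apply i) (measurable_pi_apply j)

theorem pi_setOf_not_injective :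
    Measure.pi (fun _ : Fin m => μ) {x | ¬ Injective x} = 0 := by
  have : {x : Fin m → ℝ | ¬ Injective x} = ⋃ i, ⋃ j, ⋃ (_ : i ≠ j), {x | x i = x j} := by
    ext x; simp [Injective, and_comm]
  rw [this]
  exact measure_iUnion_null fun i => measure_iUnion_null fun j => measure_iUnion_null fun hij =>
    pi_setOf_apply_eq_apply hij

theorem pi_setOf_mem_strictMono_comp_perm {s : Set ℝ} (hs : MeasurableSet s)
    (σ : Equiv.Perm (Fin m)) :
    Measure.pi (fun _ : Fin m => μ) {x | (∀ i, x i ∈ s) ∧ StrictMono (x ∘ σ)} =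
      μ s ^ m / m.factorial := by
  set ν := Measure.pi fun _ : Fin m => μ
  set S : Equiv.Perm (Fin m) → Set (Fin m → ℝ) :=
    fun τ => {x | (∀ i, x i ∈ s) ∧ StrictMono (x ∘ τ)}
  have hS : ∀ τ, MeasurableSet (S τ) := measurableSet_setOf_forall_mem_strictMono_comp hs
  have hS_eq : ∀ τ, ν (S τ) = ν (S 1) := fun τ => by
    rw [← pi_setOf_comp_perm_mem μ τ (hS 1)]
    congr 1
    ext x
    simp only [S, Set.mem_ofPred_eq, Equiv.Perm.coe_one, comp_id, comp_apply]
    exact and_congr_left' ⟨fun h i => h _, fun h b => by simpa using h (τ.symm b)⟩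
  have hbox : ν (⋃ τ, S τ) = μ s ^ m := by
    have hinj : ∀ᵐ x ∂ν, Injective x := ae_iff.mpr pi_setOf_not_injective
    have hcover : (Set.univ.pi fun _ => s) ≤ᵐ[ν] ⋃ τ, S τ := by
      filter_upwards [hinj] with x hx hxs
      obtain ⟨τ, hτ⟩ := hx.exists_perm_strictMono
      exact Set.mem_iUnion.mpr ⟨τ, fun i => hxs i trivial, hτ⟩
    have hsub : ⋃ τ, S τ ⊆ Set.univ.pi fun _ => s := fun x hx => by
      obtain ⟨τ, hτ, -⟩ := Set.mem_iUnion.mp hx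
      exact fun i _ => hτ i
    rw [le_antisymm (measure_mono hsub) (measure_mono_ae hcover), pi_pi, Finset.prod_const,
      Finset.card_univ, Fintype.card_fin]
  have hdisj : Pairwise (Disjoint on S) := fun σ τ h =>
    (pairwise_disjoint_setOf_strictMono_comp_perm h).mono (fun _ hx => hx.2) (fun _ hx => hx.2)
  have hunion : ν (⋃ τ, S τ) = m.factorial * ν (S σ) := by
    rw [measure_iUnion hdisj hS, tsum_fintype,
      Finset.sum_congr rfl fun τ _ => (hS_eq τ).trans (hS_eq σ).symm, Finset.sum_const,
      Finset.card_univ, Fintype.card_perm, Fintype.card_fin, nsmul_eq_mul]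
  rw [ENNReal.eq_div_iff (Nat.cast_ne_zero.mpr m.factorial_ne_zero) (ENNReal.natCast_ne_top _),
    ← hunion, hbox]

end MeasureTheory.Measure

theorem Real.hasSum_pow_odd_sub_pow_even_div_factorial (c : ℝ) :
    HasSum (fun k : ℕ =>
        c ^ (2 * k + 1) / (2 * k + 1).factorial - c ^ (2 * k + 2) / (2 * k + 2).factorial)
      (1 - Real.exp (-c)) := by
  have hcosh : HasSum (fun k : ℕ => c ^ (2 * k + 2) / (2 * k + 2).factorial) (Real.cosh c - 1) := by
    simpa [mul_add] using (hasSum_nat_add_iff' 1).mpr (Real.hasSum_cosh c)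
  have hsinh_sub_cosh : Real.sinh c - (Real.cosh c - 1) = 1 - Real.exp (-c) := by
    rw [← Real.cosh_sub_sinh]; ring
  simpa only [hsinh_sub_cosh] using (Real.hasSum_sinh c).sub hcosh

namespace ProbabilityTheory

theorem iIndepFun.map_comp_eq_pi {Ω ι κ β : Type*} [MeasurableSpace Ω] [Fintype κ]
    [MeasurableSpace β] {P : Measure Ω} {ξ : ι → Ω → β} {μ : Measure β}
    (hmeas : ∀ i, Measurable (ξ i)) (hindep : iIndepFun ξ P) (hlaw : ∀ i, P.map (ξ i) = μ)
    {g : κ → ι} (hg : Injective g) :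
    P.map (fun ω k => ξ (g k) ω) = Measure.pi fun _ => μ := by
  simpa [hlaw] using (hindep.precomp hg).map_fun_eq_pi_map fun k => (hmeas (g k)).aemeasurable

section DescentChain

variable {Ω : Type*}

def descentChain (ξ : ℕ → Ω → ℝ) (t : ℝ) (n : ℕ) : Set Ω :=
  {ω | ξ 0 ω ≤ t ∧ ∀ i < n, ξ (i + 1) ω < ξ i ω}

theorem descentChain_eq_preimage (ξ : ℕ → Ω → ℝ) (t : ℝ) (n : ℕ) :
    descentChain ξ t n = (fun ω (i : Fin (n + 1)) => ξ i ω) ⁻¹'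
      {x | (∀ i, x i ∈ Set.Iic t) ∧ StrictMono (x ∘ Fin.revPerm)} := by
  ext ω
  have hanti : (∀ i < n, ξ (i + 1) ω < ξ i ω) ↔ StrictAnti fun i : Fin (n + 1) => ξ i ω := by
    simp [Fin.strictAnti_iff_succ_lt, Fin.forall_iff]
  simp only [descentChain, Set.mem_preimage, Set.mem_ofPred_eq, Set.mem_Iic, hanti,
    Fin.strictMono_comp_revPerm_iff]
  exact ⟨fun ⟨h0, h⟩ => ⟨fun i => (h.antitone (Fin.zero_le i)).trans h0, h⟩,
    fun ⟨h0, h⟩ => ⟨h0 0, h⟩⟩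

theorem descentChain_succ (ξ : ℕ → Ω → ℝ) (t : ℝ) (n : ℕ) :
    descentChain ξ t (n + 1) = descentChain ξ t n ∩ {ω | ξ (n + 1) ω < ξ n ω} := by
  ext ω
  simp only [descentChain, Set.mem_inter_iff, Set.mem_ofPred_eq, Nat.forall_lt_succ_right,
    and_assoc]

theorem pairwise_disjoint_descentChain_inter_lt (ξ : ℕ → Ω → ℝ) (t : ℝ) :
    Pairwise (Disjoint on fun n => descentChain ξ t n ∩ {ω | ξ n ω < ξ (n + 1) ω}) := by
  refine pairwise_disjoint_on _ |>.mpr fun m n hmn => Set.disjoint_left.mpr ?_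
  rintro ω ⟨-, hm⟩ ⟨⟨-, hn⟩, -⟩
  exact (hn m hmn).asymm hm

end DescentChain

variable {Ω : Type*} [MeasurableSpace Ω] {P : Measure Ω} {ξ : ℕ → Ω → ℝ} {μ : Measure ℝ}

variable [IsProbabilityMeasure P]

theorem measurableSet_descentChain (hmeas : ∀ i, Measurable (ξ i)) (t : ℝ) (n : ℕ) :
    MeasurableSet (descentChain ξ t n) := by
  rw [descentChain_eq_preimage]
  exact measurableSet_setOf_forall_mem_strictMono_comp measurableSet_Iic _
    |>.preimage (measurable_pi_lambda _ fun i => hmeas i)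

theorem measure_descentChain [NullSingletonClass μ] (hmeas : ∀ i, Measurable (ξ i))
    (hindep : iIndepFun ξ P) (hlaw : ∀ i, P.map (ξ i) = μ) (t : ℝ) (n : ℕ) :
    P (descentChain ξ t n) = μ (Set.Iic t) ^ (n + 1) / (n + 1).factorial := by
  have : IsProbabilityMeasure μ := hlaw 0 ▸ Measure.isProbabilityMeasure_map (hmeas 0).aemeasurable
  rw [descentChain_eq_preimage, ← Measure.map_apply (f := fun ω (i : Fin (n + 1)) => ξ i ω)
    (measurable_pi_lambda _ fun i => hmeas i)
    (measurableSet_setOf_forall_mem_strictMono_comp measurableSet_Iic _),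
    hindep.map_comp_eq_pi hmeas hlaw Fin.val_injective,
    Measure.pi_setOf_mem_strictMono_comp_perm measurableSet_Iic]

theorem measureReal_descentChain [NullSingletonClass μ] (hmeas : ∀ i, Measurable (ξ i))
    (hindep : iIndepFun ξ P) (hlaw : ∀ i, P.map (ξ i) = μ) (t : ℝ) (n : ℕ) :
    P.real (descentChain ξ t n) = μ.real (Set.Iic t) ^ (n + 1) / (n + 1).factorial := by
  simp [measureReal_def, measure_descentChain hmeas hindep hlaw, ENNReal.toReal_div]

theorem measure_setOf_eq_eq_zero [NullSingletonClass μ] (hmeas : ∀ i, Measurable (ξ i))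
    (hindep : iIndepFun ξ P) (hlaw : ∀ i, P.map (ξ i) = μ) {i j : ℕ} (hij : i ≠ j) :
    P {ω | ξ i ω = ξ j ω} = 0 :=
  have : NullSingletonClass (P.map (ξ j)) := hlaw j ▸ inferInstance
  (hindep.indepFun hij).measure_eq_eq_zero (hmeas i) (hmeas j)

theorem measureReal_descentChain_inter_lt [NullSingletonClass μ] (hmeas : ∀ i, Measurable (ξ i))
    (hindep : iIndepFun ξ P) (hlaw : ∀ i, P.map (ξ i) = μ) (t : ℝ) (n : ℕ) :
    P.real (descentChain ξ t n ∩ {ω | ξ n ω < ξ (n + 1) ω}) =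
      P.real (descentChain ξ t n) - P.real (descentChain ξ t (n + 1)) := by
  have hne : ∀ᵐ ω ∂P, ξ n ω ≠ ξ (n + 1) ω :=
    ae_iff.mpr (by simpa using measure_setOf_eq_eq_zero hmeas hindep hlaw n.ne_add_one)
  have hae : (descentChain ξ t n ∩ {ω | ξ n ω < ξ (n + 1) ω} : Set Ω) =ᵐ[P]
      (descentChain ξ t n \ descentChain ξ t (n + 1) : Set Ω) := by
    filter_upwards [hne] with ω hω
    change (ω ∈ (_ : Set Ω)) = (ω ∈ (_ : Set Ω))
    simp only [descentChain_succ, Set.mem_inter_iff, Set.mem_ofPred_eq, not_and, not_lt,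
      hω.le_iff_lt, eq_iff_iff]
    tauto
  have hsub : descentChain ξ t (n + 1) ⊆ descentChain ξ t n := by
    rw [descentChain_succ]; exact Set.inter_subset_left
  rw [measureReal_congr hae, measureReal_sdiff hsub (measurableSet_descentChain hmeas t (n + 1))]

end ProbabilityTheory

open ProbabilityTheory

/-- `P(ξ₀ ≤ t and odd descent at 0) = 1 - exp (-F t)` for an i.i.d. sequence with
continuous distribution function `F`. An odd descent at 0 of length `2k+1` is the event
`ξ₀ > ξ₁ > ⋯ > ξ_{2k} < ξ_{2k+1}` (for `k = 0` this is just `ξ₀ < ξ₁`). -/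
theorem prob_odd_descent_le (Ω : Type*) [MeasurableSpace Ω] (P : Measure Ω)
    [IsProbabilityMeasure P] (ξ : ℕ → Ω → ℝ) (μ : Measure ℝ) (F : ℝ → ℝ)
    (hmeas : ∀ i, Measurable (ξ i))
    (hindep : iIndepFun ξ P)
    (hlaw : ∀ i, Measure.map (ξ i) P = μ)
    (hcont : ∀ x : ℝ, μ {x} = 0)
    (hF : ∀ x, F x = (μ (Set.Iic x)).toReal) (t : ℝ) :
    P {ω | ξ 0 ω ≤ t ∧ ∃ k : ℕ,
        (∀ i : ℕ, i < 2 * k → ξ (i + 1) ω < ξ i ω) ∧ ξ (2 * k) ω < ξ (2 * k + 1) ω} =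
      ENNReal.ofReal (1 - Real.exp (-F t)) := by
  have : NullSingletonClass μ := ⟨hcont⟩
  set E : ℕ → Set Ω := fun k => descentChain ξ t (2 * k) ∩ {ω | ξ (2 * k) ω < ξ (2 * k + 1) ω}
  have hevent : {ω | ξ 0 ω ≤ t ∧ ∃ k : ℕ,
      (∀ i : ℕ, i < 2 * k → ξ (i + 1) ω < ξ i ω) ∧ ξ (2 * k) ω < ξ (2 * k + 1) ω} = ⋃ k, E k := by
    ext ω
    simp [E, descentChain, and_assoc]
  have hdisj : Pairwise (Disjoint on E) :=
    (pairwise_disjoint_descentChain_inter_lt ξ t).comp_of_injective fun _ _ h => by omega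
  have hmeasE : ∀ k, MeasurableSet (E k) := fun k =>
    (measurableSet_descentChain hmeas t _).inter (measurableSet_lt (hmeas _) (hmeas _))
  have hsum : HasSum (fun k => P.real (E k)) (1 - Real.exp (-F t)) := by
    convert Real.hasSum_pow_odd_sub_pow_even_div_factorial (F t) using 2 with k
    rw [measureReal_descentChain_inter_lt hmeas hindep hlaw,
      measureReal_descentChain hmeas hindep hlaw, measureReal_descentChain hmeas hindep hlaw, hF,
      measureReal_def]
  rw [hevent, measure_iUnion hdisj hmeasE, ← hsum.tsum_eq,
    ENNReal.ofReal_tsum_of_nonneg (fun _ => measureReal_nonneg) hsum.summable]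
  exact tsum_congr fun k => (ofReal_measureReal (measure_ne_top P (E k))).symm
end

section
/- For i.i.d. (ξ_j)_{j≥1} with continuous distribution, the events 'descent of even length at i' for different lengths 2ℓ are pairwise disjoint, and P(even descent at i) = ∑_{ℓ≥1} P(ξ_i > ξ_{i+1} > ⋯ > ξ_{i+2ℓ−1} < ξ_{i+2ℓ}) = ∑_{ℓ≥1} 2ℓ/(2ℓ+1)! = e^{−1}. -/
/-!
For i.i.d. atomless `ξ`, ties occur with probability zero, so almost surely exactly one of the
`m!` orderings of `ξ_i, …, ξ_{i+m-1}` holds, and they are equally likely by exchangeability: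
the decreasing run `ξ_i > ⋯ > ξ_{i+m-1}` has probability `1/m!`. A descent of length exactly
`m` is such a run which does not extend to length `m + 1`, hence has probability
`1/m! - 1/(m+1)! = m/(m+1)!`. Summing over even `m = 2ℓ` pairs up the exponential series:
`∑ 2ℓ/(2ℓ+1)! = ∑ₙ (-1)ⁿ/n! = e⁻¹`.
-/

open MeasureTheory ProbabilityTheory
open scoped Nat ENNReal

theorem measurableSet_setOf_strictAnti {Ω : Type*} [MeasurableSpace Ω] {n : ℕ}
    {X : Fin n → Ω → ℝ} (hmeas : ∀ k, Measurable (X k)) :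
    MeasurableSet {ω | StrictAnti fun k => X k ω} := by
  simp only [StrictAnti, Set.ofPred_forall]
  measurability

namespace ProbabilityTheory

variable {Ω β ι : Type*} [MeasurableSpace Ω] [MeasurableSpace β] {P : Measure Ω}
  {μ : Measure β}

theorem IndepFun.measure_setOf_eq_eq_zero [MeasurableEq β] [IsFiniteMeasure P] {X Y : Ω → β}
    (hXY : IndepFun X Y P) (hX : Measurable X) (hY : Measurable Y)
    [NullSingletonClass (P.map Y)] :
    P {ω | X ω = Y ω} = 0 := by
  have hdiag : MeasurableSet (Set.diagonal β) := measurableSet_diagonal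
  rw [show {ω | X ω = Y ω} = (fun ω => (X ω, Y ω)) ⁻¹' Set.diagonal β from rfl,
    ← Measure.map_apply (hX.prodMk hY) hdiag,
    (indepFun_iff_map_prod_eq_prod_map_map hX.aemeasurable hY.aemeasurable).1 hXY,
    Measure.prod_apply hdiag]
  simp [Set.preimage, Set.diagonal]

section IdenticallyDistributed

variable {X : ι → Ω → β} (hmeas : ∀ k, Measurable (X k)) (hlaw : ∀ k, P.map (X k) = μ)
include hmeas hlaw

theorem iIndepFun.map_fun_eq_pi [Fintype ι] (hX : iIndepFun X P) :
    P.map (fun ω k => X k ω) = Measure.pi fun _ => μ := by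
  rw [hX.map_fun_eq_pi_map fun k => (hmeas k).aemeasurable]
  simp only [hlaw]

theorem iIndepFun.measure_setOf_eq_eq_zero [MeasurableEq β] [IsFiniteMeasure P]
    [NullSingletonClass μ] (hX : iIndepFun X P) {a b : ι} (hab : a ≠ b) :
    P {ω | X a ω = X b ω} = 0 := by
  have : NullSingletonClass (P.map (X b)) := hlaw b ▸ inferInstance
  exact (hX.indepFun hab).measure_setOf_eq_eq_zero (hmeas a) (hmeas b)

theorem iIndepFun.measure_setOf_not_injective [MeasurableEq β] [IsFiniteMeasure P]
    [NullSingletonClass μ] [Countable ι] (hX : iIndepFun X P) :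
    P {ω | ¬ Function.Injective fun k => X k ω} = 0 := by
  have hsub : {ω | ¬ Function.Injective fun k => X k ω} ⊆
      ⋃ (a) (b) (_ : a ≠ b), {ω | X a ω = X b ω} := by
    intro ω hω
    simp only [Function.Injective, not_forall] at hω
    obtain ⟨a, b, hab, hne⟩ := hω
    simp only [Set.mem_iUnion]
    exact ⟨a, b, hne, hab⟩
  refine measure_mono_null hsub ?_
  exact measure_iUnion_null fun a => measure_iUnion_null fun b => measure_iUnion_null
    fun hab => hX.measure_setOf_eq_eq_zero hmeas hlaw hab

end IdenticallyDistributed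

section Orderings

variable {μ : Measure ℝ} {n : ℕ} {X : Fin n → Ω → ℝ} (hmeas : ∀ k, Measurable (X k))
  (hlaw : ∀ k, P.map (X k) = μ)
include hmeas hlaw

theorem iIndepFun.measure_setOf_strictAnti_comp_perm (hX : iIndepFun X P)
    (σ : Equiv.Perm (Fin n)) :
    P {ω | StrictAnti fun k => X (σ k) ω} = P {ω | StrictAnti fun k => X k ω} := by
  have hS : MeasurableSet {x : Fin n → ℝ | StrictAnti x} :=
    measurableSet_setOf_strictAnti (X := fun (k : Fin n) (x : Fin n → ℝ) => x k) measurable_pi_apply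
  change P ((fun ω k => X (σ k) ω) ⁻¹' {x | StrictAnti x}) =
    P ((fun ω k => X k ω) ⁻¹' {x | StrictAnti x})
  rw [← Measure.map_apply (measurable_pi_lambda _ fun k => hmeas (σ k)) hS,
    ← Measure.map_apply (measurable_pi_lambda _ hmeas) hS,
    (hX.precomp σ.injective).map_fun_eq_pi (fun k => hmeas (σ k)) (fun k => hlaw (σ k)),
    hX.map_fun_eq_pi hmeas hlaw]

theorem iIndepFun.measure_setOf_strictAnti [IsProbabilityMeasure P] [NullSingletonClass μ]
    (hX : iIndepFun X P) :
    P {ω | StrictAnti fun k => X k ω} = (n ! : ℝ≥0∞)⁻¹ := by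
  set C : Equiv.Perm (Fin n) → Set Ω := fun σ => {ω | StrictAnti fun k => X (σ k) ω}
  have hmeasC (σ : Equiv.Perm (Fin n)) : MeasurableSet (C σ) :=
    measurableSet_setOf_strictAnti fun k => hmeas (σ k)
  have hdisj : Pairwise (Function.onFun Disjoint C) := by
    intro σ τ hne
    refine Set.disjoint_left.2 fun ω hσ hτ => hne ?_
    have hinj : Function.Injective fun k => X k ω := hσ.injective.of_comp_right σ.surjective
    have heq := Tuple.unique_antitone (f := fun k => X k ω) hσ.antitone hτ.antitone
    exact Equiv.ext fun k => hinj (congrFun heq k)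
  have hcover : {ω | Function.Injective fun k => X k ω} ⊆ ⋃ σ, C σ := by
    intro ω hω
    set x : Fin n → ℝ := fun k => X k ω
    refine Set.mem_iUnion.2 ⟨Tuple.sort (OrderDual.toDual ∘ x), ?_⟩
    have hanti := monotone_toDual_comp_iff.1 (Tuple.monotone_sort (OrderDual.toDual ∘ x))
    exact hanti.strictAnti_of_injective (hω.comp (Equiv.injective _))
  have hunion : P (⋃ σ, C σ) = 1 := by
    refine (prob_compl_eq_zero_iff (MeasurableSet.iUnion hmeasC)).1 ?_
    exact measure_mono_null (fun ω hω hinj => hω (hcover hinj))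
      (hX.measure_setOf_not_injective hmeas hlaw)
  have hsum : P {ω | StrictAnti fun k => X k ω} * n ! = 1 := by
    rw [← hunion, measure_iUnion hdisj hmeasC, tsum_fintype]
    simp only [C, hX.measure_setOf_strictAnti_comp_perm hmeas hlaw, Finset.sum_const,
      Finset.card_univ, Fintype.card_perm, Fintype.card_fin, nsmul_eq_mul, mul_comm]
  exact ENNReal.eq_inv_of_mul_eq_one_left hsum

end Orderings

end ProbabilityTheory

theorem ENNReal.inv_factorial_eq_div_add_inv (m : ℕ) :
    ((m ! : ℝ≥0∞))⁻¹ = m / (m + 1)! + ((m + 1)! : ℝ≥0∞)⁻¹ := by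
  have hm : ((m + 1 : ℕ) : ℝ≥0∞) ≠ 0 := by exact_mod_cast Nat.succ_ne_zero m
  rw [div_eq_mul_inv, ← add_one_mul, Nat.factorial_succ, Nat.cast_mul,
    ENNReal.mul_inv (Or.inl hm) (Or.inl (ENNReal.natCast_ne_top _)), ← mul_assoc]
  push_cast at hm ⊢
  rw [ENNReal.mul_inv_cancel hm (by simp), one_mul]

theorem Real.hasSum_two_mul_div_factorial :
    HasSum (fun ℓ : ℕ => (2 * ℓ : ℝ) / (2 * ℓ + 1)!) (Real.exp (-1)) := by
  set f : ℕ → ℝ := fun n => (-1) ^ n / (n ! : ℝ)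
  have hf : HasSum f (Real.exp (-1)) := by
    rw [Real.exp_eq_exp_ℝ]
    exact NormedSpace.expSeries_div_hasSum_exp (-1 : ℝ)
  have heven := (hf.summable.comp_injective (mul_right_injective₀ two_ne_zero)).hasSum
  have hodd := (hf.summable.comp_injective
    ((add_left_injective 1).comp (mul_right_injective₀ two_ne_zero))).hasSum
  have hpair : HasSum (fun ℓ => f (2 * ℓ) + f (2 * ℓ + 1)) (Real.exp (-1)) := by
    rw [hf.unique (heven.even_add_odd hodd)]
    exact heven.add hodd
  convert hpair using 2 with ℓ
  simp only [f, pow_succ, pow_mul, Nat.factorial_succ, Nat.cast_mul]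
  field_simp
  push_cast
  ring

theorem ENNReal.tsum_two_mul_div_factorial :
    ∑' ℓ : ℕ, (2 * ℓ : ℝ≥0∞) / (2 * ℓ + 1)! = ENNReal.ofReal (Real.exp (-1)) := by
  rw [← Real.hasSum_two_mul_div_factorial.tsum_eq, ENNReal.ofReal_tsum_of_nonneg
    (fun _ => by positivity) Real.hasSum_two_mul_div_factorial.summable]
  congr 1 with ℓ
  rw [ENNReal.ofReal_div_of_pos (by positivity)]
  norm_cast

section Descents

variable {Ω : Type*} (ξ : ℕ → Ω → ℝ) (i : ℕ)

def decreasingRun (m : ℕ) : Set Ω :=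
  {ω | ∀ j : ℕ, j + 1 < m → ξ (i + j + 1) ω < ξ (i + j) ω}

def descent (m : ℕ) : Set Ω :=
  decreasingRun ξ i m ∩ {ω | ξ (i + m - 1) ω < ξ (i + m) ω}

variable {ξ i}

theorem decreasingRun_eq_setOf_strictAnti (m : ℕ) :
    decreasingRun ξ i m = {ω | StrictAnti fun k : Fin m => ξ (i + k) ω} := by
  ext ω
  rcases m with _ | m
  · simp [decreasingRun, Subsingleton.strictAnti]
  · simp only [decreasingRun, Set.mem_ofPred_eq, Fin.strictAnti_iff_succ_lt, Fin.forall_iff,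
      Fin.val_succ, Fin.val_castSucc, ← add_assoc]
    exact ⟨fun h j hj => h j (by omega), fun h j hj => h j (by omega)⟩

theorem decreasingRun_antitone : Antitone (decreasingRun ξ i) :=
  fun _ _ hmm' _ hω j hj => hω j (by omega)

theorem decreasingRun_succ {m : ℕ} (hm : 1 ≤ m) :
    decreasingRun ξ i (m + 1) = decreasingRun ξ i m ∩ {ω | ξ (i + m) ω < ξ (i + m - 1) ω} := by
  have hidx : i + (m - 1) + 1 = i + m ∧ i + (m - 1) = i + m - 1 := by omega
  ext ω
  simp only [decreasingRun, Set.mem_inter_iff, Set.mem_ofPred_eq]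
  refine ⟨fun h => ⟨fun j hj => h j (by omega), ?_⟩, fun ⟨h, hlast⟩ j hj => ?_⟩
  · have hlast := h (m - 1) (by omega)
    rwa [hidx.1, hidx.2] at hlast
  · rcases Nat.lt_or_ge (j + 1) m with hj' | hj'
    · exact h j hj'
    · rwa [show j = m - 1 by omega, hidx.1, hidx.2]

theorem disjoint_descent_decreasingRun_succ {m : ℕ} (hm : 1 ≤ m) :
    Disjoint (descent ξ i m) (decreasingRun ξ i (m + 1)) := by
  rw [decreasingRun_succ hm, Set.disjoint_left]
  intro ω h h'
  exact lt_asymm (show ξ (i + m - 1) ω < ξ (i + m) ω from h.2)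
    (show ξ (i + m) ω < ξ (i + m - 1) ω from h'.2)

theorem disjoint_descent {m m' : ℕ} (hm : 1 ≤ m) (hmm' : m < m') :
    Disjoint (descent ξ i m) (descent ξ i m') :=
  (disjoint_descent_decreasingRun_succ hm).mono_right
    (Set.inter_subset_left.trans (decreasingRun_antitone hmm'))

end Descents

section DescentProbability

variable {Ω : Type*} [MeasurableSpace Ω] {P : Measure Ω} {ξ : ℕ → Ω → ℝ} {μ : Measure ℝ}

theorem measurableSet_decreasingRun (hmeas : ∀ j, Measurable (ξ j)) (i m : ℕ) :
    MeasurableSet (decreasingRun ξ i m) := by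
  rw [decreasingRun_eq_setOf_strictAnti]
  exact measurableSet_setOf_strictAnti fun k => hmeas _

theorem measurableSet_descent (hmeas : ∀ j, Measurable (ξ j)) (i m : ℕ) :
    MeasurableSet (descent ξ i m) :=
  (measurableSet_decreasingRun hmeas i m).inter (measurableSet_lt (hmeas _) (hmeas _))

theorem measure_eq_inter_lt_add_inter_gt {X Y : Ω → ℝ} (hX : Measurable X) (hY : Measurable Y)
    (hXY : P {ω | X ω = Y ω} = 0) (A : Set Ω) :
    P A = P (A ∩ {ω | X ω < Y ω}) + P (A ∩ {ω | Y ω < X ω}) := by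
  have hgt : A ∩ {ω | Y ω < X ω} = (A \ {ω | X ω < Y ω}) \ {ω | X ω = Y ω} := by
    ext ω
    simp only [Set.mem_inter_iff, Set.mem_sdiff, Set.mem_ofPred_eq, not_lt]
    exact ⟨fun h => ⟨⟨h.1, h.2.le⟩, h.2.ne'⟩, fun h => ⟨h.1.1, h.1.2.lt_of_ne' h.2⟩⟩
  rw [hgt, measure_sdiff_null hXY, measure_inter_add_sdiff A (measurableSet_lt hX hY)]

variable [IsProbabilityMeasure P] [NullSingletonClass μ] (hmeas : ∀ j, Measurable (ξ j))
  (hindep : iIndepFun ξ P) (hlaw : ∀ j, P.map (ξ j) = μ)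
include hmeas hindep hlaw

theorem measure_decreasingRun (i m : ℕ) : P (decreasingRun ξ i m) = (m ! : ℝ≥0∞)⁻¹ := by
  rw [decreasingRun_eq_setOf_strictAnti]
  have hinj : Function.Injective fun k : Fin m => i + (k : ℕ) :=
    fun a b h => Fin.ext (Nat.add_left_cancel h)
  exact (hindep.precomp hinj).measure_setOf_strictAnti (fun k => hmeas _) fun k => hlaw _

theorem measure_descent (i : ℕ) {m : ℕ} (hm : 1 ≤ m) :
    P (descent ξ i m) = m / (m + 1)! := by
  have hties : P {ω | ξ (i + m - 1) ω = ξ (i + m) ω} = 0 :=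
    hindep.measure_setOf_eq_eq_zero hmeas hlaw (by omega)
  have hsplit := measure_eq_inter_lt_add_inter_gt (hmeas _) (hmeas _) hties (decreasingRun ξ i m)
  rw [← descent, ← decreasingRun_succ hm, measure_decreasingRun hmeas hindep hlaw,
    measure_decreasingRun hmeas hindep hlaw, ENNReal.inv_factorial_eq_div_add_inv] at hsplit
  exact (ENNReal.add_left_inj (by simp [Nat.factorial_ne_zero])).1 hsplit.symm

end DescentProbability

/-- For an i.i.d. sequence with continuous distribution, the events
"descent of even length `2ℓ` at `i`" (`ξ_i > ξ_{i+1} > ⋯ > ξ_{i+2ℓ-1} < ξ_{i+2ℓ}`) are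
pairwise disjoint, each has probability `2ℓ/(2ℓ+1)!`, and their union has probability
`e⁻¹`. -/
theorem even_descent_disjoint_and_prob (Ω : Type*) [MeasurableSpace Ω] (P : Measure Ω)
    [IsProbabilityMeasure P] (ξ : ℕ → Ω → ℝ) (μ : Measure ℝ)
    (hmeas : ∀ j, Measurable (ξ j))
    (hindep : iIndepFun ξ P)
    (hlaw : ∀ j, Measure.map (ξ j) P = μ)
    (hcont : ∀ x : ℝ, μ {x} = 0) (i : ℕ) :
    let D : ℕ → Set Ω := fun ℓ =>
      {ω | (∀ j : ℕ, j + 1 < 2 * ℓ → ξ (i + j + 1) ω < ξ (i + j) ω) ∧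
        ξ (i + 2 * ℓ - 1) ω < ξ (i + 2 * ℓ) ω}
    (∀ ℓ ℓ', 1 ≤ ℓ → 1 ≤ ℓ' → ℓ ≠ ℓ' → Disjoint (D ℓ) (D ℓ')) ∧
    (∀ ℓ, 1 ≤ ℓ → P (D ℓ) = (2 * ℓ : ENNReal) / ((2 * ℓ + 1)! : ENNReal)) ∧
    P (⋃ ℓ ∈ {ℓ : ℕ | 1 ≤ ℓ}, D ℓ) = ENNReal.ofReal (Real.exp (-1)) := by
  intro D
  have hD : D = fun ℓ => descent ξ i (2 * ℓ) := rfl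
  have : NullSingletonClass μ := ⟨hcont⟩
  have hdisj : ∀ ℓ ℓ', 1 ≤ ℓ → 1 ≤ ℓ' → ℓ ≠ ℓ' → Disjoint (D ℓ) (D ℓ') := by
    intro ℓ ℓ' hℓ hℓ' hne
    rcases hne.lt_or_gt with h | h
    · exact disjoint_descent (by omega) (by omega)
    · exact (disjoint_descent (by omega) (by omega)).symm
  have hprob : ∀ ℓ, 1 ≤ ℓ → P (D ℓ) = (2 * ℓ : ENNReal) / ((2 * ℓ + 1)! : ENNReal) := by
    intro ℓ hℓ
    rw [hD, measure_descent hmeas hindep hlaw i (by omega)]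
    push_cast
    rfl
  refine ⟨hdisj, hprob, ?_⟩
  rw [measure_biUnion (s := {ℓ : ℕ | 1 ≤ ℓ}) (Set.to_countable _)
      (fun ℓ hℓ ℓ' hℓ' => hdisj ℓ ℓ' hℓ hℓ') (fun ℓ _ => measurableSet_descent hmeas i _),
    tsum_congr fun ℓ : {ℓ : ℕ | 1 ≤ ℓ} => hprob ℓ ℓ.2,
    tsum_subtype_eq_of_support_subset (f := fun ℓ : ℕ => (2 * ℓ : ℝ≥0∞) / (2 * ℓ + 1)!),
    ENNReal.tsum_two_mul_div_factorial]
  exact fun ℓ hℓ => Nat.one_le_iff_ne_zero.2 fun h0 => hℓ (by simp [h0])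
end

section
/- For i.i.d. continuous random variables ξ₁, …, ξ_{n−1} with n ≥ 2, letting m be the position of the leftmost strict local minimum (ξ_{i−1} > ξ_i < ξ_{i+1}) in {2, …, n−2}, we have P(m ≥ i) ≤ (2/3)^{⌊i/3⌋} for all i, and consequently E[m · 1_{m<∞}] ≤ 11. -/
/-!
Split the variables into the disjoint blocks `(ξ (3k+1), ξ (3k+2), ξ (3k+3))`. As `μ` has no
atoms, ties have probability zero, and by exchangeability each variable of a block is its strict
minimum with the same probability; hence `ξ (3k+2)` is a local minimum with probability at least
`1/3`. The blocks are independent, and `m ≥ i` forces `⌊i/3⌋` of these events to fail, which gives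
`P(m ≥ i) ≤ (2/3)^⌊i/3⌋`. Finally `m · 1_{m<∞} ≤ #{1 ≤ i ≤ n-2 | m ≥ i}` pointwise, so the
expectation is at most `∑ i, (2/3)^⌊i/3⌋ ≤ 3 · 3`.
-/

open MeasureTheory ProbabilityTheory Finset
open scoped ENNReal

lemma sum_range_pow_div_le {r : ℝ} (hr₀ : 0 ≤ r) (hr₁ : r < 1) {k : ℕ} (hk : 0 < k) (N : ℕ) :
    ∑ i ∈ range N, r ^ (i / k) ≤ k / (1 - r) := by
  have hblocks : ∀ M, ∑ i ∈ range (k * M), r ^ (i / k) = k * ∑ j ∈ range M, r ^ j := by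
    intro M
    induction M with
    | zero => simp
    | succ M ih =>
      have hlast : ∑ x ∈ range k, r ^ ((k * M + x) / k) = k * r ^ M := by
        rw [sum_congr rfl fun x hx => by
          rw [Nat.mul_add_div hk, Nat.div_eq_of_lt (mem_range.1 hx), add_zero]]
        simp
      rw [Nat.mul_succ, sum_range_add, ih, hlast, sum_range_succ, mul_add]
  calc ∑ i ∈ range N, r ^ (i / k)
      ≤ ∑ i ∈ range (k * N), r ^ (i / k) :=
        sum_le_sum_of_subset_of_nonneg (range_mono (Nat.le_mul_of_pos_left N hk))
          fun _ _ _ => by positivity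
    _ = k * ∑ j ∈ range N, r ^ j := hblocks N
    _ ≤ k * (1 / (1 - r)) := by
        gcongr
        simpa using geom_sum_Ico_le_of_lt_one (m := 0) (n := N) hr₀ hr₁
    _ = k / (1 - r) := by ring

open Classical in
lemma Nat.sInf_le_card_filter_forall_le (S : Set ℕ) (N : ℕ) (hS : ∀ j ∈ S, j ≤ N) :
    sInf S ≤ #{i ∈ Icc 1 N | ∀ j ∈ S, i ≤ j} := by
  rcases S.eq_empty_or_nonempty with rfl | hne
  · simp
  calc sInf S = #(Icc 1 (sInf S)) := by simp
    _ ≤ _ := card_le_card fun i hi => by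
      rw [mem_Icc] at hi
      refine mem_filter.2 ⟨mem_Icc.2 ⟨hi.1, hi.2.trans (hS _ (Nat.sInf_mem hne))⟩, ?_⟩
      exact fun j hj => hi.2.trans (Nat.sInf_le hj)

namespace ProbabilityTheory

variable {Ω : Type*} {mΩ : MeasurableSpace Ω} {P : Measure Ω}

theorem iIndep.measure_biInter_compl_le_pow {m : ℕ → MeasurableSpace Ω} (hle : ∀ i, m i ≤ mΩ)
    (hind : iIndep m P) {b : ℕ → ℕ} (hb : Monotone b) {A : ℕ → Set Ω}
    (hA : ∀ k, MeasurableSet[⨆ i ∈ Set.Ico (b k) (b (k + 1)), m i] (A k)) {q : ℝ≥0∞}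
    (hq : ∀ k, P (A k)ᶜ ≤ q) (K : ℕ) :
    P (⋂ k < K, (A k)ᶜ) ≤ q ^ K := by
  have := hind.isProbabilityMeasure
  induction K with
  | zero => simp
  | succ K ih =>
    have hpast : MeasurableSet[⨆ i ∈ Set.Iio (b K), m i] (⋂ k < K, (A k)ᶜ) :=
      MeasurableSet.biInter (Set.to_countable _) fun k hk =>
        (biSup_mono (f := m) fun i (hi : i ∈ Set.Ico _ _) =>
          hi.2.trans_le (hb (Nat.succ_le_of_lt hk))) _ (hA k).compl
    have hdisj : Disjoint (Set.Iio (b K)) (Set.Ico (b K) (b (K + 1))) :=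
      Set.disjoint_left.2 fun i hi hi' => (Set.mem_Iio.1 hi).not_ge hi'.1
    rw [Set.biInter_lt_succ, (Indep_iff _ _ _).1 (indep_iSup_of_disjoint hle hind hdisj) _ _
      hpast (hA K).compl, pow_succ]
    exact mul_le_mul' ih (hq K)

end ProbabilityTheory

lemma MeasureTheory.Measure.prod_diagonal_eq_zero_s16 {α : Type*} [MeasurableSpace α]
    [MeasurableSingletonClass α] [MeasurableEq α] (μ ν : Measure α) [SFinite ν]
    [NullSingletonClass ν] :
    μ.prod ν {p | p.1 = p.2} = 0 := by
  rw [Measure.measure_prod_null (measurableSet_eq_fun measurable_fst measurable_snd)]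
  refine Filter.Eventually.of_forall fun x => ?_
  simp [Set.preimage]

namespace ProbabilityTheory.iIndepFun

variable {Ω ι : Type*} {mΩ : MeasurableSpace Ω} {P : Measure Ω}

section

variable [IsFiniteMeasure P] {β : Type*} [MeasurableSpace β] {ξ : ι → Ω → β} {μ : Measure β}

lemma map_pair_eq_prod (hindep : iIndepFun ξ P) (hmeas : ∀ i, Measurable (ξ i))
    (hlaw : ∀ i, P.map (ξ i) = μ) {i j : ι} (hij : i ≠ j) :
    P.map (fun ω => (ξ i ω, ξ j ω)) = μ.prod μ := by
  rw [(indepFun_iff_map_prod_eq_prod_map_map (hmeas i).aemeasurable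
    (hmeas j).aemeasurable).1 (hindep.indepFun hij), hlaw, hlaw]

lemma map_triple_eq_prod (hindep : iIndepFun ξ P) (hmeas : ∀ i, Measurable (ξ i))
    (hlaw : ∀ i, P.map (ξ i) = μ) {i j k : ι} (hij : i ≠ j) (hik : i ≠ k) (hjk : j ≠ k) :
    P.map (fun ω => (ξ i ω, ξ j ω, ξ k ω)) = μ.prod (μ.prod μ) := by
  rw [(indepFun_iff_map_prod_eq_prod_map_map (hmeas i).aemeasurable
    ((hmeas j).prodMk (hmeas k)).aemeasurable).1
    (hindep.indepFun_prodMk hmeas j k i hij.symm hik.symm).symm,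
    hlaw, hindep.map_pair_eq_prod hmeas hlaw hjk]

lemma measure_eq_eq_zero [MeasurableSingletonClass β] [MeasurableEq β] [NullSingletonClass μ]
    (hindep : iIndepFun ξ P) (hmeas : ∀ i, Measurable (ξ i))
    (hlaw : ∀ i, P.map (ξ i) = μ) {i j : ι} (hij : i ≠ j) :
    P {ω | ξ i ω = ξ j ω} = 0 := by
  have : IsFiniteMeasure μ := hlaw i ▸ Measure.isFiniteMeasure_map P (ξ i)
  have hdiag := Measure.prod_diagonal_eq_zero_s16 μ μ
  rwa [← hindep.map_pair_eq_prod hmeas hlaw hij, Measure.map_apply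
    ((hmeas i).prodMk (hmeas j)) (measurableSet_eq_fun measurable_fst measurable_snd)] at hdiag

end

variable {ξ : ι → Ω → ℝ} {μ : Measure ℝ}

lemma measure_lt_and_lt_eq [IsFiniteMeasure P] (hindep : iIndepFun ξ P)
    (hmeas : ∀ i, Measurable (ξ i)) (hlaw : ∀ i, P.map (ξ i) = μ) {i j k : ι} (hij : i ≠ j)
    (hik : i ≠ k) (hjk : j ≠ k) :
    P {ω | ξ j ω < ξ i ω ∧ ξ j ω < ξ k ω} =
      μ.prod (μ.prod μ) {p | p.2.1 < p.1 ∧ p.2.1 < p.2.2} := by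
  rw [← hindep.map_triple_eq_prod hmeas hlaw hij hik hjk,
    Measure.map_apply (by fun_prop) (by measurability)]
  rfl

variable [IsProbabilityMeasure P] [NullSingletonClass μ]

lemma one_third_le_measure_lt_and_lt (hindep : iIndepFun ξ P) (hmeas : ∀ i, Measurable (ξ i))
    (hlaw : ∀ i, P.map (ξ i) = μ) {i j k : ι} (hij : i ≠ j) (hik : i ≠ k) (hjk : j ≠ k) :
    1 / 3 ≤ P {ω | ξ j ω < ξ i ω ∧ ξ j ω < ξ k ω} := by
  have hne : ∀ {a b}, a ≠ b → ∀ᵐ ω ∂P, ξ a ω ≠ ξ b ω := fun hab =>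
    ae_iff.2 (by simpa using hindep.measure_eq_eq_zero hmeas hlaw hab)
  have hcover : ∀ᵐ ω ∂P, ω ∈ {ω | ξ j ω < ξ i ω ∧ ξ j ω < ξ k ω} ∪
      {ω | ξ i ω < ξ j ω ∧ ξ i ω < ξ k ω} ∪ {ω | ξ k ω < ξ i ω ∧ ξ k ω < ξ j ω} := by
    filter_upwards [hne hij, hne hik, hne hjk] with ω h1 h2 h3
    simp only [Set.mem_union, Set.mem_ofPred_eq]
    rcases h1.lt_or_gt with h1 | h1 <;> rcases h2.lt_or_gt with h2 | h2 <;>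
      rcases h3.lt_or_gt with h3 | h3 <;> first | tauto | (exfalso; linarith)
  refine ENNReal.div_le_of_le_mul ?_
  calc (1 : ℝ≥0∞) = P Set.univ := measure_univ.symm
    _ ≤ P ({ω | ξ j ω < ξ i ω ∧ ξ j ω < ξ k ω} ∪ {ω | ξ i ω < ξ j ω ∧ ξ i ω < ξ k ω} ∪
        {ω | ξ k ω < ξ i ω ∧ ξ k ω < ξ j ω}) := measure_mono_ae (hcover.mono fun ω h _ => h)
    _ ≤ P {ω | ξ j ω < ξ i ω ∧ ξ j ω < ξ k ω} + P {ω | ξ i ω < ξ j ω ∧ ξ i ω < ξ k ω} +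
        P {ω | ξ k ω < ξ i ω ∧ ξ k ω < ξ j ω} :=
      (measure_union_le _ _).trans (add_le_add_left (measure_union_le _ _) _)
    _ = P {ω | ξ j ω < ξ i ω ∧ ξ j ω < ξ k ω} * 3 := by
      rw [hindep.measure_lt_and_lt_eq hmeas hlaw hij hik hjk,
        hindep.measure_lt_and_lt_eq hmeas hlaw hij.symm hjk hik,
        hindep.measure_lt_and_lt_eq hmeas hlaw hik hij hjk.symm]
      ring

lemma measure_compl_lt_and_lt_le (hindep : iIndepFun ξ P) (hmeas : ∀ i, Measurable (ξ i))
    (hlaw : ∀ i, P.map (ξ i) = μ) {i j k : ι} (hij : i ≠ j) (hik : i ≠ k) (hjk : j ≠ k) :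
    P {ω | ξ j ω < ξ i ω ∧ ξ j ω < ξ k ω}ᶜ ≤ 2 / 3 := by
  have hM : MeasurableSet {ω | ξ j ω < ξ i ω ∧ ξ j ω < ξ k ω} :=
    (measurableSet_lt (hmeas j) (hmeas i)).inter (measurableSet_lt (hmeas j) (hmeas k))
  rw [prob_compl_eq_one_sub hM]
  calc 1 - P {ω | ξ j ω < ξ i ω ∧ ξ j ω < ξ k ω}
      ≤ 1 - 1 / 3 :=
        tsub_le_tsub_left (hindep.one_third_le_measure_lt_and_lt hmeas hlaw hij hik hjk) 1
    _ = 2 / 3 := by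
      refine ENNReal.sub_eq_of_eq_add (by simp) ?_
      rw [ENNReal.div_add_div_same, eq_comm, ENNReal.div_eq_one_iff] <;> norm_num

end ProbabilityTheory.iIndepFun

lemma ProbabilityTheory.iIndepFun.measure_biInter_compl_lt_and_lt_le_pow {Ω : Type*}
    [MeasurableSpace Ω] {P : Measure Ω} [IsProbabilityMeasure P] {ξ : ℕ → Ω → ℝ}
    {μ : Measure ℝ} [NullSingletonClass μ] (hindep : iIndepFun ξ P)
    (hmeas : ∀ i, Measurable (ξ i)) (hlaw : ∀ i, P.map (ξ i) = μ) (K : ℕ) :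
    P (⋂ k < K, {ω | ξ (3 * k + 2) ω < ξ (3 * k + 1) ω ∧ ξ (3 * k + 2) ω < ξ (3 * k + 3) ω}ᶜ)
      ≤ (2 / 3) ^ K := by
  refine hindep.iIndep.measure_biInter_compl_le_pow (fun i => (hmeas i).comap_le)
    (b := fun k => 3 * k + 1) (fun a b h => by dsimp only; omega) (fun k => ?_)
    (fun k => hindep.measure_compl_lt_and_lt_le hmeas hlaw (by omega) (by omega) (by omega)) K
  have hblock : ∀ j ∈ Set.Ico (3 * k + 1) (3 * (k + 1) + 1),
      Measurable[⨆ i ∈ Set.Ico (3 * k + 1) (3 * (k + 1) + 1), MeasurableSpace.comap (ξ i) _]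
        (ξ j) :=
    fun j hj => (comap_measurable (ξ j)).mono
      (le_iSup₂ (f := fun i (_ : i ∈ Set.Ico _ _) => MeasurableSpace.comap (ξ i) _) j hj) le_rfl
  exact (measurableSet_lt (hblock _ ⟨by omega, by omega⟩) (hblock _ ⟨by omega, by omega⟩)).inter
    (measurableSet_lt (hblock _ ⟨by omega, by omega⟩) (hblock _ ⟨by omega, by omega⟩))

open Classical in
lemma integral_indicator_sInf_le_sum {Ω : Type*} [MeasurableSpace Ω] (P : Measure Ω)
    [IsFiniteMeasure P] (T : Ω → Set ℕ) (N : ℕ) (hT : ∀ ω, ∀ j ∈ T ω, j ≤ N)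
    (hmeas : ∀ i, MeasurableSet {ω | ∀ j ∈ T ω, i ≤ j}) :
    ∫ ω, {ω' | (T ω').Nonempty}.indicator (fun ω' => ((sInf (T ω') : ℕ) : ℝ)) ω ∂P ≤
      ∑ i ∈ Icc 1 N, P.real {ω | ∀ j ∈ T ω, i ≤ j} := by
  have hint : ∀ i ∈ Icc 1 N, Integrable ({ω | ∀ j ∈ T ω, i ≤ j}.indicator (1 : Ω → ℝ)) P :=
    fun i _ => (integrable_const 1).indicator (hmeas i)
  rw [← sum_congr rfl fun i _ => integral_indicator_one (hmeas i), ← integral_finsetSum _ hint]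
  refine integral_mono_of_nonneg (Filter.Eventually.of_forall fun ω =>
    Set.indicator_nonneg (fun _ _ => by positivity) ω) (integrable_finsetSum _ hint)
    (Filter.Eventually.of_forall fun ω => ?_)
  calc {ω' | (T ω').Nonempty}.indicator (fun ω' => ((sInf (T ω') : ℕ) : ℝ)) ω
      ≤ ((sInf (T ω) : ℕ) : ℝ) := Set.indicator_le_self' (fun _ _ => by positivity) ω
    _ ≤ (#{i ∈ Icc 1 N | ∀ j ∈ T ω, i ≤ j} : ℝ) := by
      exact_mod_cast Nat.sInf_le_card_filter_forall_le (T ω) N (hT ω)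
    _ = ∑ i ∈ Icc 1 N, {ω | ∀ j ∈ T ω, i ≤ j}.indicator 1 ω := by
      rw [natCast_card_filter]
      simp only [Set.indicator_apply, Set.mem_ofPred_eq, Pi.one_apply]

theorem leftmost_local_min_bounds_general (Ω : Type*) [MeasurableSpace Ω] (P : Measure Ω)
    [IsProbabilityMeasure P] (n : ℕ) (ξ : ℕ → Ω → ℝ) (μ : Measure ℝ)
    (hmeas : ∀ i, Measurable (ξ i))
    (hindep : iIndepFun ξ P)
    (hlaw : ∀ i, Measure.map (ξ i) P = μ)
    (hcont : ∀ x : ℝ, μ {x} = 0) :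
    let S : Ω → Set ℕ := fun ω =>
      {i : ℕ | 2 ≤ i ∧ i ≤ n - 2 ∧ ξ i ω < ξ (i - 1) ω ∧ ξ i ω < ξ (i + 1) ω}
    (∀ i : ℕ, i ≤ n - 1 →
      P {ω | ∀ j ∈ S ω, i ≤ j} ≤ (2 / 3 : ENNReal) ^ (i / 3)) ∧
    ∫ ω, Set.indicator {ω' | (S ω').Nonempty} (fun ω' => ((sInf (S ω') : ℕ) : ℝ)) ω ∂P ≤ 11 := by
  intro S
  have : NullSingletonClass μ := ⟨hcont⟩
  have htail : ∀ i ≤ n - 1, P {ω | ∀ j ∈ S ω, i ≤ j} ≤ (2 / 3 : ℝ≥0∞) ^ (i / 3) := by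
    refine fun i hi => (measure_mono fun ω hω => ?_).trans
      (hindep.measure_biInter_compl_lt_and_lt_le_pow hmeas hlaw (i / 3))
    simp only [Set.mem_iInter]
    intro k hk hmin
    have := hω (3 * k + 2) ⟨by omega, by omega, hmin.1, hmin.2⟩
    omega
  refine ⟨htail, ?_⟩
  have hge_meas : ∀ i, MeasurableSet {ω | ∀ j ∈ S ω, i ≤ j} := fun i => by
    simp only [S, Set.mem_ofPred_eq]
    exact measurableSet_setOfPred.2 (by fun_prop)
  calc _ ≤ ∑ i ∈ Icc 1 (n - 2), P.real {ω | ∀ j ∈ S ω, i ≤ j} :=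
        integral_indicator_sInf_le_sum P S (n - 2) (fun ω j hj => hj.2.1) hge_meas
    _ ≤ ∑ i ∈ Icc 1 (n - 2), (2 / 3 : ℝ) ^ (i / 3) := sum_le_sum fun i hi => by
        simpa [measureReal_def, ENNReal.toReal_pow, ENNReal.toReal_div] using
          ENNReal.toReal_mono (by finiteness) (htail i (by simp only [mem_Icc] at hi; omega))
    _ ≤ ∑ i ∈ range (n - 1), (2 / 3 : ℝ) ^ (i / 3) :=
        sum_le_sum_of_subset_of_nonneg
          (fun i hi => by simp only [mem_Icc, mem_range] at hi ⊢; omega) fun _ _ _ => by positivity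
    _ ≤ 3 / (1 - 2 / 3) := sum_range_pow_div_le (by norm_num) (by norm_num) (by norm_num) _
    _ ≤ 11 := by norm_num

/-- For i.i.d. continuous `ξ₁, …, ξ_{n-1}`, let `m` be the position of the leftmost strict
local minimum in `{2, …, n-2}` (`m = ∞`, i.e. undefined, if there is none). Then
`P(m ≥ i) ≤ (2/3)^⌊i/3⌋` and `E[m ⬝ 1_{m < ∞}] ≤ 11`. -/
theorem leftmost_local_min_bounds (Ω : Type*) [MeasurableSpace Ω] (P : Measure Ω)
    [IsProbabilityMeasure P] (n : ℕ) (hn : 2 ≤ n) (ξ : ℕ → Ω → ℝ) (μ : Measure ℝ)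
    (hmeas : ∀ i, Measurable (ξ i))
    (hindep : iIndepFun ξ P)
    (hlaw : ∀ i, Measure.map (ξ i) P = μ)
    (hcont : ∀ x : ℝ, μ {x} = 0) :
    let S : Ω → Set ℕ := fun ω =>
      {i : ℕ | 2 ≤ i ∧ i ≤ n - 2 ∧ ξ i ω < ξ (i - 1) ω ∧ ξ i ω < ξ (i + 1) ω}
    (∀ i : ℕ, i ≤ n - 1 →
      P {ω | ∀ j ∈ S ω, i ≤ j} ≤ (2 / 3 : ENNReal) ^ (i / 3)) ∧
    ∫ ω, Set.indicator {ω' | (S ω').Nonempty} (fun ω' => ((sInf (S ω') : ℕ) : ℝ)) ω ∂P ≤ 11 :=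
  leftmost_local_min_bounds_general Ω P n ξ μ hmeas hindep hlaw hcont
end
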